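/- Let k ≥ 2 be an integer and a, b ∈ ℕ with [a,b] ∉ kS₁. If F ∈ full_{a,b}(kS₁), then E₁(F), E₂(F), ..., E_{k-1}(F) are all full Schreier sets (i.e., each is nonempty with |E_i(F)| = min E_i(F)). -/

import Mathlib

open Finset

/-- `F < G` for finite sets: every element of `F` is below every element of `G`. -/
def FinsetLT (F G : Finset ℕ) : Prop := ∀ x ∈ F, ∀ y ∈ G, x < y

/-- Membership in the Schreier family `S₁`: a finite set of positive integers
with `|F| ≤ min F` (the empty set belongs trivially). -/
def IsSchreier (F : Finset ℕ) : Prop := ∀ n ∈ F, 0 < n ∧ F.card ≤ n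

/-- `F` is a union of at most `d` sets `F₁ < F₂ < ⋯`, each in the family `P`. -/
def Combine (P : Finset ℕ → Prop) (d : ℕ) (F : Finset ℕ) : Prop :=
  ∃ L : List (Finset ℕ), L.length ≤ d ∧ L.Pairwise FinsetLT ∧
    (∀ G ∈ L, P G) ∧ L.foldr (· ∪ ·) ∅ = F

/-- Membership in `S₂`. -/
def MemS2 (F : Finset ℕ) : Prop :=
  F = ∅ ∨ ∃ h : F.Nonempty, Combine IsSchreier (F.min' h) F

/-- Membership in `S₃`. -/
def MemS3 (F : Finset ℕ) : Prop :=
  F = ∅ ∨ ∃ h : F.Nonempty, Combine MemS2 (F.min' h) F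

/-- `F` is a maximal member of the family `P` (among sets of positive integers). -/
def IsFull (P : Finset ℕ → Prop) (F : Finset ℕ) : Prop :=
  P F ∧ ∀ n : ℕ, 0 < n → n ∉ F → ¬ P (insert n F)

/-- `F ∈ full_{a,b}(P)`. -/
def FullAB (P : Finset ℕ → Prop) (a b : ℕ) (F : Finset ℕ) : Prop :=
  P F ∧ F ⊆ Finset.Icc a b ∧ a ∈ F ∧
    ∀ n ∈ Finset.Icc a b, n ∉ F → ¬ P (insert n F)

/-- The tower function `τ`. -/
def tau : ℕ → ℕ → ℕ
  | 0, a => a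
  | i + 1, a => 2 ^ tau i a

/-- `E₁(F)`: `F` itself if `|F| ≤ min F`, otherwise the `min F` smallest elements of `F`. -/
def E1 (F : Finset ℕ) : Finset ℕ :=
  if h : F.Nonempty then ((F.sort (· ≤ ·)).take (F.min' h)).toFinset else ∅

/-- Union of the first `i` greedy pieces. -/
def Eacc : ℕ → Finset ℕ → Finset ℕ
  | 0, _ => ∅
  | i + 1, F => Eacc i F ∪ E1 (F \ Eacc i F)

/-- The `i`-th greedy piece `E_i(F)` (for `i ≥ 1`). -/
def Epiece (i : ℕ) (F : Finset ℕ) : Finset ℕ := E1 (F \ Eacc (i - 1) F)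

open Classical in
/-- `E₁*(F)`: `F` itself if `F ∈ S₂`, otherwise `E₁(F) ∪ ⋯ ∪ E_{min F}(F)`. -/
noncomputable def E1star (F : Finset ℕ) : Finset ℕ :=
  if MemS2 F then F
  else if h : F.Nonempty then Eacc (F.min' h) F else ∅

/-- Union of the first `i` starred greedy pieces. -/
noncomputable def EaccStar : ℕ → Finset ℕ → Finset ℕ
  | 0, _ => ∅
  | i + 1, F => EaccStar i F ∪ E1star (F \ EaccStar i F)

/-- The `i`-th starred greedy piece `E_i*(F)` (for `i ≥ 1`). -/
noncomputable def EpieceStar (i : ℕ) (F : Finset ℕ) : Finset ℕ :=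
  E1star (F \ EaccStar (i - 1) F)

/-!
Let `R = F \ (E₁(F) ∪ ⋯ ∪ E_{i-1}(F))`. The greedy pieces are successive Schreier sets, so if
`R` were Schreier then `F` would lie in `iS₁` with `i ≤ k - 1`. As `[a,b] ∉ kS₁`, some
`n ∈ [a,b]` is missing from `F`, and adding one point costs at most one extra piece: at most one
piece `G` has elements on both sides of `n`, and `G` can be replaced by `(G ∪ {n}) \ {max}` and
`{max}`. Then `F ∪ {n} ∈ kS₁` would contradict fullness. Hence `R` is not Schreier, that is
`min R < |R|`, and `E₁(R)` consists of the `min R` smallest elements of `R`: a full Schreier set.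
-/

lemma mem_foldr_union {L : List (Finset ℕ)} {x : ℕ} :
    x ∈ L.foldr (· ∪ ·) ∅ ↔ ∃ G ∈ L, x ∈ G := by
  induction L with
  | nil => simp
  | cons G L ih => simp [ih]

lemma FinsetLT.mono {A B A' B' : Finset ℕ} (h : FinsetLT A B) (hA : A' ⊆ A) (hB : B' ⊆ B) :
    FinsetLT A' B' :=
  fun x hx y hy => h x (hA hx) y (hB hy)

namespace Combine

variable {P : Finset ℕ → Prop} {d e : ℕ} {A B F : Finset ℕ}

lemma mono (h : Combine P d F) (hde : d ≤ e) : Combine P e F := by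
  obtain ⟨L, hL, hLT, hP, hF⟩ := h
  exact ⟨L, hL.trans hde, hLT, hP, hF⟩

lemma of_mem (h : P F) : Combine P 1 F :=
  ⟨[F], by simp, by simp, by simpa using h, by simp⟩

lemma union (hA : Combine P d A) (hB : Combine P e B) (hAB : FinsetLT A B) :
    Combine P (d + e) (A ∪ B) := by
  obtain ⟨L, hL, hLT, hLP, rfl⟩ := hA
  obtain ⟨M, hM, hMT, hMP, rfl⟩ := hB
  refine ⟨L ++ M, by rw [List.length_append]; omega,
    List.pairwise_append.2 ⟨hLT, hMT, ?_⟩, ?_, ?_⟩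
  · exact fun X hX Y hY => hAB.mono (fun x hx => mem_foldr_union.2 ⟨X, hX, hx⟩)
      (fun y hy => mem_foldr_union.2 ⟨Y, hY, hy⟩)
  · simpa [or_imp, forall_and] using ⟨hLP, hMP⟩
  · ext x
    simp only [mem_foldr_union, mem_union, List.mem_append, or_and_right, exists_or]

lemma cons (hA : P A) (hB : Combine P d B) (hAB : FinsetLT A B) : Combine P (d + 1) (A ∪ B) := by
  simpa [add_comm] using (of_mem hA).union hB hAB

lemma exists_cons (h : Combine P (d + 1) F) (hP : P ∅) :
    ∃ G F', P G ∧ Combine P d F' ∧ FinsetLT G F' ∧ F = G ∪ F' := by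
  obtain ⟨L, hL, hLT, hLP, rfl⟩ := h
  cases L with
  | nil => exact ⟨∅, ∅, hP, ⟨[], by simp, by simp, by simp, rfl⟩, by simp [FinsetLT], rfl⟩
  | cons G M =>
    obtain ⟨hGM, hMT⟩ := List.pairwise_cons.1 hLT
    refine ⟨G, M.foldr (· ∪ ·) ∅, hLP G (by simp),
      ⟨M, by simpa using hL, hMT, fun X hX => hLP X (by simp [hX]), rfl⟩, ?_, rfl⟩
    intro x hx y hy
    obtain ⟨X, hX, hyX⟩ := mem_foldr_union.1 hy
    exact hGM X hX x hx y hyX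

lemma eq_empty_of_zero (h : Combine P 0 F) : F = ∅ := by
  obtain ⟨L, hL, -, -, rfl⟩ := h
  simp [List.eq_nil_of_length_eq_zero (Nat.le_zero.1 hL)]

lemma pos_of_mem (h : Combine IsSchreier d F) {x : ℕ} (hx : x ∈ F) : 0 < x := by
  obtain ⟨L, -, -, hS, rfl⟩ := h
  obtain ⟨G, hG, hxG⟩ := mem_foldr_union.1 hx
  exact (hS G hG x hxG).1

end Combine

lemma isSchreier_empty : IsSchreier ∅ := by simp [IsSchreier]

lemma isSchreier_singleton {n : ℕ} (hn : 0 < n) : IsSchreier {n} := by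
  simp only [IsSchreier, mem_singleton, forall_eq, card_singleton]
  exact ⟨hn, hn⟩

lemma isSchreier_erase_max'_insert {G : Finset ℕ} (hG : IsSchreier G) {n y : ℕ} (hy : y ∈ G)
    (hyn : y < n) (hnG : n ∉ G) :
    IsSchreier ((insert n G).erase ((insert n G).max' (insert_nonempty n G))) := by
  intro m hm
  have hcard : ((insert n G).erase ((insert n G).max' (insert_nonempty n G))).card = G.card := by
    rw [card_erase_of_mem (max'_mem _ _), card_insert_of_notMem hnG, Nat.add_sub_cancel]
  rw [hcard]
  rcases mem_insert.1 (mem_of_mem_erase hm) with rfl | hm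
  · exact ⟨(hG y hy).1.trans hyn, (hG y hy).2.trans hyn.le⟩
  · exact hG m hm

lemma Combine.insert_of_forall_lt {d : ℕ} {F : Finset ℕ} (hF : Combine IsSchreier d F) {n : ℕ}
    (hn : 0 < n) (hnF : ∀ y ∈ F, n < y) : Combine IsSchreier (d + 1) (insert n F) := by
  rw [insert_eq]
  exact (Combine.of_mem (isSchreier_singleton hn)).union hF (by simpa [FinsetLT] using hnF)
    |>.mono (by omega)

lemma Combine.insert_of_mem_lt {d : ℕ} {G F : Finset ℕ} (hG : IsSchreier G)
    (hF : Combine IsSchreier d F) (hGF : FinsetLT G F) {n y : ℕ} (hy : y ∈ G) (hyn : y < n)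
    (hnG : n ∉ G) (hnF : ∀ z ∈ F, n < z) : Combine IsSchreier (d + 2) (insert n (G ∪ F)) := by
  set M := (insert n G).max' (insert_nonempty n G)
  have hlt_M : ∀ x ∈ (insert n G).erase M, x < M := fun x hx =>
    lt_of_le_of_ne (le_max' _ _ (mem_of_mem_erase hx)) (ne_of_mem_erase hx)
  have hM_lt : FinsetLT {M} F := by
    intro m hm z hz
    rw [mem_singleton.1 hm]
    rcases mem_insert.1 (max'_mem (insert n G) (insert_nonempty n G)) with h | h
    · exact lt_of_eq_of_lt h (hnF z hz)
    · exact hGF _ h z hz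
  have hM_pos : 0 < M := (hG y hy).1.trans_le (le_max' _ _ (mem_insert_of_mem hy))
  have hpieces := Combine.cons (isSchreier_erase_max'_insert hG hy hyn hnG)
    (Combine.cons (isSchreier_singleton hM_pos) hF hM_lt) fun x hx z hz =>
      (mem_union.1 hz).elim (fun hz => mem_singleton.1 hz ▸ hlt_M x hx)
        fun hz => (hlt_M x hx).trans (hM_lt M (mem_singleton_self M) z hz)
  rwa [← union_assoc, union_comm _ {M}, ← insert_eq, insert_erase (max'_mem _ _),
    insert_union] at hpieces

lemma Combine.insert_succ {d : ℕ} {F : Finset ℕ} (hF : Combine IsSchreier d F) {n : ℕ}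
    (hn : 0 < n) (hnF : n ∉ F) : Combine IsSchreier (d + 1) (insert n F) := by
  induction d generalizing F with
  | zero =>
    rw [hF.eq_empty_of_zero]
    exact Combine.of_mem (isSchreier_singleton hn)
  | succ d ih =>
    by_cases hbelow : ∀ y ∈ F, n < y
    · exact hF.insert_of_forall_lt hn hbelow
    obtain ⟨G, F', hG, hF', hGF', rfl⟩ := hF.exists_cons isSchreier_empty
    simp only [mem_union, not_or] at hnF
    by_cases hF'n : ∃ y ∈ F', y < n
    · obtain ⟨y, hy, hyn⟩ := hF'n
      have hG_lt : FinsetLT G (insert n F') := by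
        intro x hx z hz
        rcases mem_insert.1 hz with rfl | hz
        · exact (hGF' x hx y hy).trans hyn
        · exact hGF' x hx z hz
      simpa only [union_insert] using Combine.cons hG (ih hF' hnF.2) hG_lt
    · have hnF' : ∀ z ∈ F', n < z := fun z hz =>
        lt_of_le_of_ne (not_lt.1 fun h => hF'n ⟨z, hz, h⟩) fun h => hnF.2 (h ▸ hz)
      obtain ⟨y, hy, hyn⟩ : ∃ y ∈ G, y < n := by
        push Not at hbelow
        obtain ⟨y, hy, hyn⟩ := hbelow
        rcases mem_union.1 hy with hy | hy
        · exact ⟨y, hy, lt_of_le_of_ne hyn fun h => hnF.1 (h ▸ hy)⟩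
        · exact absurd hyn (not_le.2 (hnF' y hy))
      exact Combine.insert_of_mem_lt hG hF' hGF' hy hyn hnF.1 hnF'

lemma E1_subset (G : Finset ℕ) : E1 G ⊆ G := by
  unfold E1
  split_ifs
  · intro x hx
    exact (mem_sort _).1 (List.mem_of_mem_take (List.mem_toFinset.1 hx))
  · exact empty_subset G

lemma E1_lt_sdiff (G : Finset ℕ) : FinsetLT (E1 G) (G \ E1 G) := by
  unfold E1
  split_ifs with h
  · intro x hx y hy
    rw [mem_sdiff, List.mem_toFinset] at hy
    rw [List.mem_toFinset] at hx
    have hsorted := (sortedLT_sort G).pairwise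
    have hy_sort := (mem_sort (· ≤ ·)).2 hy.1
    rw [← List.take_append_drop (G.min' h) (G.sort (· ≤ ·))] at hsorted hy_sort
    rw [List.pairwise_append] at hsorted
    exact hsorted.2.2 x hx y ((List.mem_append.1 hy_sort).resolve_left hy.2)
  · simp [FinsetLT]

lemma card_E1 {G : Finset ℕ} (h : G.Nonempty) : (E1 G).card = min (G.min' h) G.card := by
  unfold E1
  rw [dif_pos h,
    List.toFinset_card_of_nodup ((sort_nodup _ _).sublist (List.take_sublist _ _))]
  simp

lemma min'_mem_E1 {G : Finset ℕ} (h : G.Nonempty) (hpos : 0 < G.min' h) : G.min' h ∈ E1 G := by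
  obtain ⟨x, hx⟩ : (E1 G).Nonempty := by
    rw [← card_pos, card_E1 h]
    exact lt_min hpos (card_pos.2 h)
  by_contra hmin
  exact (E1_lt_sdiff G x hx _ (mem_sdiff.2 ⟨min'_mem G h, hmin⟩)).not_ge
    (min'_le G x (E1_subset G hx))

lemma isSchreier_E1 {G : Finset ℕ} (hpos : ∀ x ∈ G, 0 < x) : IsSchreier (E1 G) := by
  intro m hm
  have hmG := E1_subset G hm
  refine ⟨hpos m hmG, ?_⟩
  rw [card_E1 ⟨m, hmG⟩]
  exact (min_le_left _ _).trans (min'_le G m hmG)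

lemma isFull_E1_of_not_isSchreier {G : Finset ℕ} (hpos : ∀ x ∈ G, 0 < x)
    (hG : ¬ IsSchreier G) : IsFull IsSchreier (E1 G) := by
  obtain ⟨m, hm, hcard⟩ : ∃ m ∈ G, m < G.card := by
    simp only [IsSchreier, not_forall, not_and, not_le] at hG
    obtain ⟨m, hm, h⟩ := hG
    exact ⟨m, hm, h (hpos m hm)⟩
  have hne : G.Nonempty := ⟨m, hm⟩
  have hcard_E1 : (E1 G).card = G.min' hne := by
    rw [card_E1 hne, min_eq_left ((min'_le G m hm).trans hcard.le)]
  have hmin := min'_mem_E1 hne (hpos _ (min'_mem G hne))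
  refine ⟨isSchreier_E1 hpos, fun n hn hnE hS => ?_⟩
  have hcard_insert : (insert n (E1 G)).card = G.min' hne + 1 := by
    rw [card_insert_of_notMem hnE, hcard_E1]
  rcases lt_or_ge n (G.min' hne) with h | h
  · have := (hS n (mem_insert_self _ _)).2
    omega
  · have := (hS _ (mem_insert_of_mem hmin)).2
    omega

lemma Eacc_subset (j : ℕ) (F : Finset ℕ) : Eacc j F ⊆ F := by
  induction j with
  | zero => exact empty_subset F
  | succ j ih => exact union_subset ih ((E1_subset _).trans sdiff_subset)

lemma Eacc_lt_sdiff (j : ℕ) (F : Finset ℕ) : FinsetLT (Eacc j F) (F \ Eacc j F) := by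
  induction j with
  | zero => simp [FinsetLT, Eacc]
  | succ j ih =>
    intro x hx y hy
    simp only [Eacc, mem_sdiff, mem_union, not_or] at hx hy
    rcases hx with hx | hx
    · exact ih x hx y (mem_sdiff.2 ⟨hy.1, hy.2.1⟩)
    · exact E1_lt_sdiff _ x hx y (mem_sdiff.2 ⟨mem_sdiff.2 ⟨hy.1, hy.2.1⟩, hy.2.2⟩)

lemma combine_Eacc {F : Finset ℕ} (hpos : ∀ x ∈ F, 0 < x) (j : ℕ) :
    Combine IsSchreier j (Eacc j F) := by
  induction j with
  | zero => exact ⟨[], le_rfl, List.Pairwise.nil, by simp, rfl⟩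
  | succ j ih =>
    exact ih.union (Combine.of_mem (isSchreier_E1 fun x hx => hpos x (mem_sdiff.1 hx).1))
      ((Eacc_lt_sdiff j F).mono subset_rfl (E1_subset _))

lemma combine_of_isSchreier_sdiff_Eacc {F : Finset ℕ} (hpos : ∀ x ∈ F, 0 < x) {j : ℕ}
    (h : IsSchreier (F \ Eacc j F)) : Combine IsSchreier (j + 1) F := by
  simpa [union_sdiff_of_subset (Eacc_subset j F)] using
    (combine_Eacc hpos j).union (Combine.of_mem h) (Eacc_lt_sdiff j F)

theorem stmt15_general (k : ℕ) (a b : ℕ)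
    (hab : ¬ Combine IsSchreier k (Finset.Icc a b))
    (F : Finset ℕ) (hF : FullAB (Combine IsSchreier k) a b F) :
    ∀ i, 1 ≤ i → i ≤ k - 1 → IsFull IsSchreier (Epiece i F) := by
  intro i hi1 hik
  obtain ⟨hFk, hFsub, haF, hmax⟩ := hF
  have hpos : ∀ x ∈ F, 0 < x := fun x hx => hFk.pos_of_mem hx
  refine isFull_E1_of_not_isSchreier (fun x hx => hpos x (mem_sdiff.1 hx).1) fun hR => ?_
  obtain ⟨n, hn, hnF⟩ : ∃ n ∈ Icc a b, n ∉ F :=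
    not_subset.1 fun h => hab (hFsub.antisymm h ▸ hFk)
  have hFi : Combine IsSchreier i F := by
    simpa [Nat.sub_add_cancel hi1] using combine_of_isSchreier_sdiff_Eacc hpos hR
  have hn_pos : 0 < n := (hpos a haF).trans_le (mem_Icc.1 hn).1
  exact hmax n hn hnF ((hFi.insert_succ hn_pos hnF).mono (by omega))

theorem stmt15 (k : ℕ) (hk : 2 ≤ k) (a b : ℕ)
    (hab : ¬ Combine IsSchreier k (Finset.Icc a b))
    (F : Finset ℕ) (hF : FullAB (Combine IsSchreier k) a b F) :
    ∀ i, 1 ≤ i → i ≤ k - 1 → IsFull IsSchreier (Epiece i F) :=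
  stmt15_general k a b hab F hF
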